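/- For two massless four-vectors p_i, p_j along the +x axis (p_x > 0) with small rapidities, the pT-weighted angular separation ΔR_{ij}(p_{T,i} + p_{T,j}) is invariant to leading order under a simultaneous x–t boost with rapidity w: writing primes for boosted quantities, ΔR'_{ij}(p'_{T,i} + p'_{T,j}) = ΔR_{ij}(p_{T,i} + p_{T,j}) + o(max_k(|y_{y,k}| + |y_{z,k}|)) as all rapidities y_{y,k}, y_{z,k} → 0. -/

import Mathlib

open Filter Asymptotics

/-- The real inverse hyperbolic tangent. -/
noncomputable def artanh (x : ℝ) : ℝ := (1 / 2) * Real.log ((1 + x) / (1 - x))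

/-- The x-component of a massless four-vector with energy `E` and rapidities
`y_y`, `y_z` (so that `p_y = E tanh y_y`, `p_z = E tanh y_z`). -/
noncomputable def pxOf (E yy yz : ℝ) : ℝ :=
  E * Real.sqrt (1 - Real.tanh yy ^ 2 - Real.tanh yz ^ 2)

/-- The observables `(η, φ, p_T)` of a massless particle with energy `E` and
rapidities `(y_y, y_z)` after an x–t boost with rapidity `w` (take `w = 0`
for the unboosted particle). -/
noncomputable def obsP (w E yy yz : ℝ) : ℝ × ℝ × ℝ :=
  let px := pxOf E yy yz
  let py := E * Real.tanh yy
  let pz := E * Real.tanh yz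
  let E' := E * Real.cosh w + px * Real.sinh w
  let px' := E * Real.sinh w + px * Real.cosh w
  (artanh (pz / E'), Real.arctan (py / px'), Real.sqrt (px' ^ 2 + py ^ 2))

/-- The pT-weighted angular separation `ΔR_{ij} (p_{T,i} + p_{T,j})` of two
massless particles, after a simultaneous x–t boost with rapidity `w`. -/
noncomputable def weightedDR (w E1 yy1 yz1 E2 yy2 yz2 : ℝ) : ℝ :=
  let o1 := obsP w E1 yy1 yz1
  let o2 := obsP w E2 yy2 yz2
  Real.sqrt ((o1.1 - o2.1) ^ 2 + (o1.2.1 - o2.2.1) ^ 2) * (o1.2.2 + o2.2.2)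

/-! At zero transverse rapidities a massless particle moves along the `+x` axis, where the
x–t boost acts by rescaling: to first order in the rapidities `(η, φ) = e^{-w} (y_z, y_y)`,
while `p_T → |E| e^{w}`. As `(η, φ)` vanishes at zero rapidity, `ΔR` is `e^{-w}` times the
norm of a fixed linear map up to `o(‖y‖)`, and multiplying by the transverse momenta, which
only need to converge, cancels the factors `e^{∓w}`. So for every `w` the weighted separation
agrees to first order with the same `w`-independent quantity. -/

open Topology

theorem Prod.norm_le_norm_add_norm {α β : Type*} [SeminormedAddCommGroup α]
    [SeminormedAddCommGroup β] (x : α × β) : ‖x‖ ≤ ‖x.1‖ + ‖x.2‖ :=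
  Prod.norm_def x ▸ max_le (le_add_of_nonneg_right (norm_nonneg _))
    (le_add_of_nonneg_left (norm_nonneg _))

section Asymptotics

variable {α E : Type*} [NormedAddCommGroup E] {l : Filter α}

theorem isLittleO_mul_sub_mul_of_tendsto {f ℓ g : α → ℝ} {k : α → E} {b : ℝ}
    (hf : (fun x => f x - ℓ x) =o[l] k) (hℓ : ℓ =O[l] k) (hg : Tendsto g l (𝓝 b)) :
    (fun x => f x * g x - ℓ x * b) =o[l] k := by
  have hg' : (fun x => g x - b) =o[l] (fun _ => (1 : ℝ)) :=
    isLittleO_one_iff ℝ |>.2 (tendsto_sub_nhds_zero_iff.2 hg)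
  refine isLittleO_norm_right.1 <| ((hf.norm_right.mul_isBigO (hg.isBigO_one ℝ)).add
    (hℓ.norm_right.mul_isLittleO hg')).congr (fun x => by ring) fun x => by simp

end Asymptotics

section Calculus

variable {E F : Type*} [NormedAddCommGroup E] [NormedSpace ℝ E]
  [NormedAddCommGroup F] [NormedSpace ℝ F] {x₀ : E}

theorem HasFDerivAt.div_of_eq_zero {c d : E → ℝ} {c' : E →L[ℝ] ℝ} (hc : HasFDerivAt c c' x₀)
    (hc₀ : c x₀ = 0) (hd : ContinuousAt d x₀) (hd₀ : d x₀ ≠ 0) :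
    HasFDerivAt (fun x => c x / d x) ((d x₀)⁻¹ • c') x₀ := by
  refine .of_isLittleO ?_
  have h := isLittleO_mul_sub_mul_of_tendsto (g := fun x => (d x)⁻¹) (b := (d x₀)⁻¹)
    (by simpa [hc₀] using hc.isLittleO) (c'.isBigO_sub _ x₀) (hd.inv₀ hd₀)
  refine h.congr (fun x => ?_) fun _ => rfl
  simp [hc₀, div_eq_mul_inv, mul_comm]

theorem HasFDerivAt.isLittleO_norm_mul_sub {A : E → F} {L : E →L[ℝ] F} {B : E → ℝ} {b : ℝ}
    (hA : HasFDerivAt A L x₀) (hA₀ : A x₀ = 0) (hB : Tendsto B (𝓝 x₀) (𝓝 b)) :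
    (fun x => ‖A x‖ * B x - ‖L (x - x₀)‖ * b) =o[𝓝 x₀] (fun x => x - x₀) := by
  refine isLittleO_mul_sub_mul_of_tendsto ?_ (L.isBigO_sub _ x₀).norm_left hB
  refine (isBigO_of_le _ fun x => ?_).trans_isLittleO hA.isLittleO
  simpa [hA₀] using abs_norm_sub_norm_le (A x) (L (x - x₀))

end Calculus

namespace Real

theorem hasDerivAt_tanh (x : ℝ) : HasDerivAt tanh (cosh x ^ 2)⁻¹ x := by
  rw [show tanh = sinh / cosh from funext tanh_eq_sinh_div_cosh]
  refine ((hasDerivAt_sinh x).div (hasDerivAt_cosh x) (cosh_pos x).ne').congr_deriv ?_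
  rw [← sq, ← sq, cosh_sq', add_sub_cancel_right, one_div]

@[fun_prop]
theorem continuous_tanh : Continuous tanh :=
  continuous_iff_continuousAt.2 fun x => (hasDerivAt_tanh x).continuousAt

end Real

theorem hasDerivAt_artanh {x : ℝ} (hx : |x| < 1) : HasDerivAt artanh (1 - x ^ 2)⁻¹ x := by
  obtain ⟨h₁, h₂⟩ := abs_lt.1 hx
  have hq := ((hasDerivAt_id' x).const_add 1).div ((hasDerivAt_id' x).const_sub 1)
    (sub_ne_zero.2 h₂.ne')
  have h := (hq.log (div_pos (by linarith) (by linarith)).ne').const_mul (1 / 2)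
  refine h.congr_deriv ?_
  have : 1 - x ≠ 0 := by linarith
  have : 1 + x ≠ 0 := by linarith
  rw [show 1 - x ^ 2 = (1 - x) * (1 + x) by ring, Pi.div_apply]
  field_simp
  ring

theorem hasFDerivAt_comp_tanh_div {E : Type*} [NormedAddCommGroup E] [NormedSpace ℝ E]
    {f : ℝ → ℝ} (hf : HasDerivAt f 1 0) (a : ℝ) (ℓ : E →L[ℝ] ℝ) {d : E → ℝ}
    (hd : ContinuousAt d 0) (hd₀ : d 0 ≠ 0) :
    HasFDerivAt (fun y => f (a * Real.tanh (ℓ y) / d y)) ((a / d 0) • ℓ) 0 := by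
  have hnum : HasFDerivAt (fun y => a * Real.tanh (ℓ y)) (a • ℓ) 0 := by
    simpa using ((Real.hasDerivAt_tanh (ℓ 0)).comp_hasFDerivAt 0 ℓ.hasFDerivAt).const_mul a
  have hratio := hnum.div_of_eq_zero (by simp) hd hd₀
  have hf' : HasDerivAt f 1 (a * Real.tanh (ℓ 0) / d 0) := by simpa using hf
  simpa [smul_smul, div_eq_inv_mul, Function.comp_def] using hf'.comp_hasFDerivAt 0 hratio

theorem pxOf_zero (E : ℝ) : pxOf E 0 0 = E := by simp [pxOf]

-- `(η, φ)` as a point of the Euclidean plane, so that `ΔR` is a distance.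
noncomputable def angularCoords (w E : ℝ) (y : ℝ × ℝ) : WithLp 2 (ℝ × ℝ) :=
  WithLp.toLp 2 ((obsP w E y.1 y.2).1, (obsP w E y.1 y.2).2.1)

noncomputable def linearAngularCoords : ℝ × ℝ →L[ℝ] WithLp 2 (ℝ × ℝ) :=
  (WithLp.prodContinuousLinearEquiv 2 ℝ ℝ ℝ).symm.toContinuousLinearMap ∘L
    (ContinuousLinearMap.snd ℝ ℝ ℝ).prod (ContinuousLinearMap.fst ℝ ℝ ℝ)

section Particle

variable (w : ℝ) {E : ℝ}

theorem angularCoords_zero : angularCoords w E 0 = 0 := by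
  simp [angularCoords, obsP, artanh]

theorem hasFDerivAt_angularCoords (hE : E ≠ 0) :
    HasFDerivAt (angularCoords w E) (Real.exp (-w) • linearAngularCoords) 0 := by
  have hden₀ (c s : ℝ) : E * c + pxOf E (0 : ℝ × ℝ).1 (0 : ℝ × ℝ).2 * s = E * (c + s) := by
    simp [pxOf_zero, mul_add]
  have hE' : E * Real.exp w ≠ 0 := mul_ne_zero hE (Real.exp_pos w).ne'
  have hratio : E / (E * Real.exp w) = Real.exp (-w) := by
    rw [Real.exp_neg]
    field_simp
  have hη := hasFDerivAt_comp_tanh_div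
    (by simpa using hasDerivAt_artanh (x := 0) (by simp)) E
    (ContinuousLinearMap.snd ℝ ℝ ℝ)
    (d := fun y : ℝ × ℝ => E * Real.cosh w + pxOf E y.1 y.2 * Real.sinh w)
    (by unfold pxOf; fun_prop) (by rwa [hden₀, Real.cosh_add_sinh])
  have hφ := hasFDerivAt_comp_tanh_div (by simpa using Real.hasDerivAt_arctan 0) E
    (ContinuousLinearMap.fst ℝ ℝ ℝ)
    (d := fun y : ℝ × ℝ => E * Real.sinh w + pxOf E y.1 y.2 * Real.cosh w)
    (by unfold pxOf; fun_prop) (by rwa [hden₀, Real.sinh_add_cosh])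
  rw [hden₀, Real.cosh_add_sinh, hratio] at hη
  rw [hden₀, Real.sinh_add_cosh, hratio] at hφ
  exact (WithLp.prodContinuousLinearEquiv 2 ℝ ℝ ℝ).symm.hasFDerivAt.comp 0 (hη.prodMk hφ)

end Particle

theorem tendsto_obsP_pT (w E : ℝ) :
    Tendsto (fun y : ℝ × ℝ => (obsP w E y.1 y.2).2.2) (𝓝 0) (𝓝 (|E| * Real.exp w)) := by
  have hc : Continuous fun y : ℝ × ℝ => (obsP w E y.1 y.2).2.2 := by
    simp only [obsP, pxOf]
    fun_prop
  convert hc.tendsto 0 using 2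
  simp [obsP, pxOf_zero, ← mul_add, Real.sinh_add_cosh, Real.sqrt_sq_eq_abs, abs_mul]

theorem weightedDR_eq_norm_mul (w E1 yy1 yz1 E2 yy2 yz2 : ℝ) :
    weightedDR w E1 yy1 yz1 E2 yy2 yz2 =
      ‖angularCoords w E1 (yy1, yz1) - angularCoords w E2 (yy2, yz2)‖ *
        ((obsP w E1 yy1 yz1).2.2 + (obsP w E2 yy2 yz2).2.2) := by
  simp [weightedDR, angularCoords, WithLp.prod_norm_eq_of_L2]

theorem isLittleO_weightedDR_sub (w : ℝ) {E1 E2 : ℝ} (h1 : E1 ≠ 0) (h2 : E2 ≠ 0) :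
    (fun v : (ℝ × ℝ) × (ℝ × ℝ) => weightedDR w E1 v.1.1 v.1.2 E2 v.2.1 v.2.2 -
        ‖linearAngularCoords v.1 - linearAngularCoords v.2‖ * (|E1| + |E2|))
      =o[𝓝 0] fun v => v := by
  have hA := ((hasFDerivAt_angularCoords w h1).comp (0 : (ℝ × ℝ) × (ℝ × ℝ))
    (f := Prod.fst) hasFDerivAt_fst).sub ((hasFDerivAt_angularCoords w h2).comp
      (0 : (ℝ × ℝ) × (ℝ × ℝ)) (f := Prod.snd) hasFDerivAt_snd)
  have hB := ((tendsto_obsP_pT w E1).comp (continuous_fst.tendsto' 0 0 rfl)).add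
    ((tendsto_obsP_pT w E2).comp (continuous_snd.tendsto' 0 0 rfl))
  have h := hA.isLittleO_norm_mul_sub (by simp [angularCoords_zero]) hB
  refine h.congr (fun v => ?_) sub_zero
  simp only [Pi.sub_apply, Function.comp_apply, sub_zero, sub_apply,
    ContinuousLinearMap.comp_apply, smul_apply, ContinuousLinearMap.coe_fst',
    ContinuousLinearMap.coe_snd', ← smul_sub, norm_smul, weightedDR_eq_norm_mul, Prod.mk.eta,
    Real.norm_eq_abs, Real.abs_exp]
  rw [Real.exp_neg]
  field_simp

/-- `ΔR'_{ij}(p'_{T,i} + p'_{T,j}) = ΔR_{ij}(p_{T,i} + p_{T,j}) +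
o(max_k(|y_{y,k}| + |y_{z,k}|))` as all rapidities tend to `0`, for a
simultaneous x–t boost with rapidity `w` of both massless particles. -/
theorem weightedDR_boostXT_invariant_leading_order (w E1 E2 : ℝ)
    (h1 : 0 < E1) (h2 : 0 < E2) :
    (fun v : (ℝ × ℝ) × (ℝ × ℝ) =>
        weightedDR w E1 v.1.1 v.1.2 E2 v.2.1 v.2.2 -
          weightedDR 0 E1 v.1.1 v.1.2 E2 v.2.1 v.2.2)
      =o[nhds 0]
    (fun v : (ℝ × ℝ) × (ℝ × ℝ) =>
        max (|v.1.1| + |v.1.2|) (|v.2.1| + |v.2.2|)) := by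
  have h := (isLittleO_weightedDR_sub w h1.ne' h2.ne').sub
    (isLittleO_weightedDR_sub 0 h1.ne' h2.ne')
  refine (h.congr (fun v => by ring) fun _ => rfl).trans_isBigO (isBigO_of_le _ fun v => ?_)
  rw [Prod.norm_def, Real.norm_eq_abs]
  refine (max_le_max ?_ ?_).trans (le_abs_self _) <;>
    exact (Prod.norm_le_norm_add_norm _).trans_eq (by rw [Real.norm_eq_abs, Real.norm_eq_abs])
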